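/- arXiv:2410.22434 — 13 statements merged into one kernel-verified Lean document; each statement's English description precedes it below -/
import Mathlib

section
/- Let N ≥ 3, let λ₀ ∈ ℝ^N be the first standard basis vector (1,0,…,0) and q₀ ∈ ℝ^N the all-ones vector (1,…,1). Then the N×N matrix 𝓜_N(q₀,λ₀) has rank exactly N − 2. -/
/-!
With `G = ‖q‖²‖λ‖² − (λ·q)²` the Gram determinant of `q, λ`, one has
`𝓜 x = −G x + a(x) q + b(x) λ` for linear forms `a, b`, and `𝓜 q = 𝓜 λ = 0`. Hence if `G ≠ 0`
the kernel of `𝓜` is exactly `span {q, λ}`, which is two-dimensional because `G ≠ 0` rules out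
a linear relation between `q` and `λ`; rank–nullity gives rank `N − 2`. At `q₀ = (1,…,1)`,
`λ₀ = e₁` we have `G = N − 1 ≠ 0`.
-/

/-- Dot product on `ℝ^N`. -/
noncomputable def dotProd {N : ℕ} (x y : Fin N → ℝ) : ℝ := ∑ i, x i * y i

/-- The matrix `𝓜_N(q,λ) = [(λ·q)² − ‖q‖²‖λ‖²]·I_N + 𝓝_N(q,λ)`, where
`𝓝_N(q,λ)_{ij} = qᵢ(‖λ‖²q_j − (λ·q)λ_j) + λᵢ(‖q‖²λ_j − (λ·q)q_j)`. -/
noncomputable def calM {N : ℕ} (q lam : Fin N → ℝ) : Matrix (Fin N) (Fin N) ℝ :=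
  Matrix.of fun i j =>
    ((dotProd lam q) ^ 2 - dotProd q q * dotProd lam lam) * (if i = j then 1 else 0)
      + (q i * (dotProd lam lam * q j - dotProd lam q * lam j)
        + lam i * (dotProd q q * lam j - dotProd lam q * q j))

open Matrix

section
variable {N : ℕ} (q lam : Fin N → ℝ)

noncomputable def gramDet : ℝ := q ⬝ᵥ q * lam ⬝ᵥ lam - (lam ⬝ᵥ q) ^ 2

theorem calM_eq_smul_one_add_vecMulVec :
    calM q lam = -gramDet q lam • (1 : Matrix (Fin N) (Fin N) ℝ)
      + vecMulVec q ((lam ⬝ᵥ lam) • q - (lam ⬝ᵥ q) • lam)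
      + vecMulVec lam ((q ⬝ᵥ q) • lam - (lam ⬝ᵥ q) • q) := by
  ext i j
  simp only [calM, dotProd, gramDet, dotProduct, of_apply, Matrix.add_apply, Matrix.smul_apply,
    one_apply, vecMulVec_apply, Pi.sub_apply, Pi.smul_apply, smul_eq_mul]
  ring

theorem calM_mulVec (x : Fin N → ℝ) : calM q lam *ᵥ x =
    -gramDet q lam • x + (lam ⬝ᵥ lam * q ⬝ᵥ x - lam ⬝ᵥ q * lam ⬝ᵥ x) • q
      + (q ⬝ᵥ q * lam ⬝ᵥ x - lam ⬝ᵥ q * q ⬝ᵥ x) • lam := by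
  rw [calM_eq_smul_one_add_vecMulVec]
  ext i
  simp only [neg_smul, add_mulVec, neg_mulVec, smul_mulVec, one_mulVec, vecMulVec_mulVec,
    sub_dotProduct, smul_dotProduct, smul_eq_mul, MulOpposite.op_sub, MulOpposite.op_mul,
    Pi.add_apply, Pi.neg_apply, Pi.smul_apply, MulOpposite.smul_eq_mul_unop,
    MulOpposite.unop_sub, MulOpposite.unop_mul, MulOpposite.unop_op]
  ring

theorem calM_mulVec_left : calM q lam *ᵥ q = 0 := by
  ext i
  simp only [calM_mulVec, gramDet, Pi.add_apply, Pi.smul_apply, smul_eq_mul, Pi.zero_apply]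
  ring

theorem calM_mulVec_right : calM q lam *ᵥ lam = 0 := by
  ext i
  simp only [calM_mulVec, gramDet, dotProduct_comm q lam, Pi.add_apply, Pi.smul_apply,
    smul_eq_mul, Pi.zero_apply]
  ring

variable {q lam}

theorem linearIndependent_pair_of_gramDet_ne_zero (h : gramDet q lam ≠ 0) :
    LinearIndependent ℝ ![q, lam] := by
  rw [LinearIndependent.pair_iff]
  intro a b hab
  have hq : a * q ⬝ᵥ q + b * lam ⬝ᵥ q = 0 := by
    simpa [add_dotProduct, smul_dotProduct] using congrArg (· ⬝ᵥ q) hab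
  have hl : a * q ⬝ᵥ lam + b * lam ⬝ᵥ lam = 0 := by
    simpa [add_dotProduct, smul_dotProduct] using congrArg (· ⬝ᵥ lam) hab
  rw [dotProduct_comm q lam] at hl
  constructor
  · refine (mul_eq_zero.mp ?_).resolve_right h
    rw [gramDet]; linear_combination lam ⬝ᵥ lam * hq - lam ⬝ᵥ q * hl
  · refine (mul_eq_zero.mp ?_).resolve_right h
    rw [gramDet]; linear_combination q ⬝ᵥ q * hl - lam ⬝ᵥ q * hq

theorem ker_calM_of_gramDet_ne_zero (h : gramDet q lam ≠ 0) :
    LinearMap.ker (calM q lam).mulVecLin = Submodule.span ℝ {q, lam} := by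
  apply le_antisymm
  · intro x hx
    rw [LinearMap.mem_ker, mulVecLin_apply, calM_mulVec] at hx
    rw [Submodule.mem_span_pair]
    refine ⟨(lam ⬝ᵥ lam * q ⬝ᵥ x - lam ⬝ᵥ q * lam ⬝ᵥ x) / gramDet q lam,
      (q ⬝ᵥ q * lam ⬝ᵥ x - lam ⬝ᵥ q * q ⬝ᵥ x) / gramDet q lam, ?_⟩
    ext i
    have hxi := congrFun hx i
    simp only [neg_smul, Pi.add_apply, Pi.neg_apply, Pi.smul_apply, smul_eq_mul, Pi.zero_apply]
      at hxi ⊢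
    field_simp
    linear_combination hxi
  · rw [Submodule.span_le]
    rintro y (rfl | rfl)
    exacts [calM_mulVec_left y lam, calM_mulVec_right q y]

theorem rank_calM_of_gramDet_ne_zero (h : gramDet q lam ≠ 0) : (calM q lam).rank = N - 2 := by
  have hker : Module.finrank ℝ (LinearMap.ker (calM q lam).mulVecLin) = 2 := by
    rw [ker_calM_of_gramDet_ne_zero h, ← Matrix.range_cons_cons_empty q lam ![],
      finrank_span_eq_card (linearIndependent_pair_of_gramDet_ne_zero h), Fintype.card_fin]
  have hrankNullity := LinearMap.finrank_range_add_finrank_ker (calM q lam).mulVecLin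
  rw [hker, Module.finrank_fin_fun] at hrankNullity
  exact Nat.eq_sub_of_add_eq hrankNullity
end

/-- For `N ≥ 3`, `λ₀ = (1,0,…,0)` and `q₀ = (1,…,1)`, the matrix `𝓜_N(q₀,λ₀)`
has rank exactly `N − 2`. -/
theorem rank_calM_at_special_point (N : ℕ) (hN : 3 ≤ N) :
    (calM (fun _ : Fin N => (1 : ℝ)) (fun i : Fin N => if (i : ℕ) = 0 then 1 else 0)).rank
      = N - 2 := by
  have : NeZero N := ⟨by omega⟩
  have hG : gramDet (fun _ : Fin N => (1 : ℝ)) (fun i : Fin N => if (i : ℕ) = 0 then 1 else 0)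
      = N - 1 := by
    simp [gramDet, dotProduct, Fin.val_eq_zero_iff]
  apply rank_calM_of_gramDet_ne_zero
  rw [hG, sub_ne_zero]
  exact_mod_cast (by omega : N ≠ 1)
end

section
/- For all vectors q, λ ∈ ℝ^N and every index j, one has Σᵢ λᵢ·𝓜_N(q,λ)_{ij} = 0 and Σᵢ qᵢ·𝓜_N(q,λ)_{ij} = 0 (i.e. both λ and q lie in the kernel of the transpose of 𝓜_N(q,λ)). Consequently, if λ and q are linearly independent, then the rank of 𝓜_N(q,λ) is at most N − 2. -/
/-! For any `x`, the row vector `xᵀ 𝓜_N(q,λ)` is a combination of `x`, `‖λ‖²q − (λ·q)λ` and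
`‖q‖²λ − (λ·q)q` with coefficients `(λ·q)² − ‖q‖²‖λ‖²`, `x·q` and `x·λ`; for `x = λ` or `x = q`
these three terms cancel. Two independent left null vectors then bound the rank by `N − 2`. -/

lemma dotProd_comm {N : ℕ} (x y : Fin N → ℝ) : dotProd x y = dotProd y x := by
  simp only [dotProd, mul_comm]

lemma sum_mul_calM {N : ℕ} (q lam x : Fin N → ℝ) (j : Fin N) :
    ∑ i, x i * calM q lam i j =
      (dotProd lam q ^ 2 - dotProd q q * dotProd lam lam) * x j
        + dotProd x q * (dotProd lam lam * q j - dotProd lam q * lam j)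
        + dotProd x lam * (dotProd q q * lam j - dotProd lam q * q j) := by
  have hterm : ∀ i, x i * calM q lam i j =
      (dotProd lam q ^ 2 - dotProd q q * dotProd lam lam) * (if j = i then x i else 0)
        + x i * q i * (dotProd lam lam * q j - dotProd lam q * lam j)
        + x i * lam i * (dotProd q q * lam j - dotProd lam q * q j) := by
    intro i
    simp only [calM, Matrix.of_apply, eq_comm (a := j)]
    split_ifs <;> ring
  simp only [hterm, Finset.sum_add_distrib, ← Finset.mul_sum, ← Finset.sum_mul,
    Finset.sum_ite_eq, Finset.mem_univ, if_true, dotProd]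

lemma sum_lam_mul_calM {N : ℕ} (q lam : Fin N → ℝ) (j : Fin N) :
    ∑ i, lam i * calM q lam i j = 0 := by
  rw [sum_mul_calM]; ring

lemma sum_q_mul_calM {N : ℕ} (q lam : Fin N → ℝ) (j : Fin N) :
    ∑ i, q i * calM q lam i j = 0 := by
  rw [sum_mul_calM, dotProd_comm q lam]; ring

theorem Matrix.card_add_rank_le_of_vecMul_eq_zero {K m n ι : Type*} [Field K] [Fintype m]
    [Fintype n] [Fintype ι] {v : ι → m → K} (hv : LinearIndependent K v) {B : Matrix m n K}
    (hB : ∀ i, Matrix.vecMul (v i) B = 0) : Fintype.card ι + B.rank ≤ Fintype.card m := by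
  have hA : (Matrix.of v).rank = Fintype.card ι := hv.rank_matrix
  rw [← hA]
  refine Matrix.rank_add_rank_le_card_of_mul_eq_zero (Matrix.ext fun i j => ?_)
  exact congrFun (hB i) j

/-- Both `λ` and `q` lie in the kernel of the transpose of `𝓜_N(q,λ)`:
`Σᵢ λᵢ 𝓜_{ij} = 0` and `Σᵢ qᵢ 𝓜_{ij} = 0` for every `j`. Consequently, if `λ`
and `q` are linearly independent, the rank of `𝓜_N(q,λ)` is at most `N − 2`. -/
theorem calM_transpose_kernel_and_rank (N : ℕ) (q lam : Fin N → ℝ) :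
    (∀ j, ∑ i, lam i * calM q lam i j = 0) ∧
    (∀ j, ∑ i, q i * calM q lam i j = 0) ∧
    (LinearIndependent ℝ ![lam, q] → (calM q lam).rank ≤ N - 2) := by
  refine ⟨sum_lam_mul_calM q lam, sum_q_mul_calM q lam, fun hli => ?_⟩
  have hker : ∀ i, Matrix.vecMul (![lam, q] i) (calM q lam) = 0 := by
    intro i
    fin_cases i <;> ext j
    · exact sum_lam_mul_calM q lam j
    · exact sum_q_mul_calM q lam j
  have hcard := Matrix.card_add_rank_le_of_vecMul_eq_zero hli hker
  simp only [Fintype.card_fin] at hcard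
  omega
end

section
/- Let λ ∈ ℝ^N with M := ‖λ‖², let W : ℝ × ℝ → ℝ be differentiable, and set V(q) = W(λ·q, ‖q‖²). Write W₁ = ∂₁W(λ·q,‖q‖²) and W₂ = ∂₂W(λ·q,‖q‖²). Then ∇V(q) = W₁·λ + 2W₂·q, and the map Φ(q,p) = (q',p') with q' = ∇V(q) − p, p' = q satisfies: λ·p' = λ·q; ‖p'‖² = ‖q‖²; λ·q' = M·W₁ + 2(λ·q)·W₂ − λ·p; ‖q'‖² = M·W₁² + 4(λ·q)·W₁W₂ + 4‖q‖²·W₂² − 2(λ·p)·W₁ − 4(q·p)·W₂ + ‖p‖²; and q'·p' − M/2 = −(q·p − M/2) + (λ·q)·W₁ + 2‖q‖²·W₂ − M. In particular the evolution is closed in the six functions A₋ = λ·q, A₊ = λ·p, B₋ = ‖q‖², B₊ = ‖p‖², K = q·p − M/2, M. -/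
/-!
By the chain rule, `V = W ∘ (⟪λ, ·⟫, ⟪·, ·⟫)` has gradient `W₁ • λ + 2 W₂ • q`, since the
derivative of `⟪q, q⟫` is `2 ⟪q, ·⟫`. Once `q'` is written as `W₁ • λ + 2 W₂ • q - p`, the
remaining identities are bilinear expansions of inner products.
-/

open scoped RealInnerProductSpace

theorem ContinuousLinearMap.apply_prod_eq_add (D : ℝ × ℝ →L[ℝ] ℝ) (a b : ℝ) :
    D (a, b) = a * D (1, 0) + b * D (0, 1) := by
  have hab : ((a, b) : ℝ × ℝ) = a • ((1 : ℝ), (0 : ℝ)) + b • ((0 : ℝ), (1 : ℝ)) := by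
    simp
  rw [hab, map_add, map_smul, map_smul, smul_eq_mul, smul_eq_mul]

section

variable {E : Type*} [NormedAddCommGroup E] [InnerProductSpace ℝ E]

theorem hasFDerivAt_inner_self (x : E) :
    HasFDerivAt (fun y : E => ⟪y, y⟫) ((2 : ℝ) • innerSL ℝ x) x := by
  refine ((hasFDerivAt_id x).inner ℝ (hasFDerivAt_id x)).congr_fderiv ?_
  ext v
  simp [two_mul, real_inner_comm]

theorem hasGradientAt_comp_inner_inner_self [CompleteSpace E] {W : ℝ × ℝ → ℝ} (a x : E)
    (hW : DifferentiableAt ℝ W (⟪a, x⟫, ⟪x, x⟫)) :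
    HasGradientAt (fun y => W (⟪a, y⟫, ⟪y, y⟫))
      (fderiv ℝ W (⟪a, x⟫, ⟪x, x⟫) (1, 0) • a
        + (2 * fderiv ℝ W (⟪a, x⟫, ⟪x, x⟫) (0, 1)) • x) x := by
  have hV := hW.hasFDerivAt.comp x
    (((innerSL ℝ a).hasFDerivAt).prodMk (hasFDerivAt_inner_self x))
  set D := fderiv ℝ W (⟪a, x⟫, ⟪x, x⟫)
  rw [hasGradientAt_iff_hasFDerivAt]
  refine hV.congr_fderiv ?_
  ext v
  rw [ContinuousLinearMap.comp_apply, ContinuousLinearMap.prod_apply, D.apply_prod_eq_add]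
  simp only [InnerProductSpace.toDual_apply_apply, FunLike.coe_smul, Pi.smul_apply,
    innerSL_apply_apply, inner_add_left, real_inner_smul_left, smul_eq_mul]
  ring

end

/-- For a potential of the form `V(q) = W(λ·q, ‖q‖²)` with `W` differentiable, the
gradient is `∇V(q) = W₁·λ + 2W₂·q` (with `W₁ = ∂₁W(λ·q,‖q‖²)`, `W₂ = ∂₂W(λ·q,‖q‖²)`),
and the standard-form map `Φ(q,p) = (∇V(q) − p, q)` evolves the `𝔥₆` generators as:
`λ·p' = λ·q`, `‖p'‖² = ‖q‖²`, `λ·q' = M·W₁ + 2(λ·q)W₂ − λ·p`,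
`‖q'‖² = M·W₁² + 4(λ·q)W₁W₂ + 4‖q‖²W₂² − 2(λ·p)W₁ − 4(q·p)W₂ + ‖p‖²`, and
`q'·p' − M/2 = −(q·p − M/2) + (λ·q)W₁ + 2‖q‖²W₂ − M`, where `M = ‖λ‖²`.
In particular the evolution is closed in the six generator functions. -/
theorem h6_closure_for_radial_plus_linear_potential (N : ℕ)
    (lam : EuclideanSpace ℝ (Fin N))
    (W : ℝ × ℝ → ℝ) (hW : Differentiable ℝ W) :
    let M : ℝ := ⟪lam, lam⟫
    let V : EuclideanSpace ℝ (Fin N) → ℝ := fun q => W (⟪lam, q⟫, ⟪q, q⟫)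
    ∀ q p : EuclideanSpace ℝ (Fin N),
      let W₁ : ℝ := fderiv ℝ W (⟪lam, q⟫, ⟪q, q⟫) (1, 0)
      let W₂ : ℝ := fderiv ℝ W (⟪lam, q⟫, ⟪q, q⟫) (0, 1)
      let q' : EuclideanSpace ℝ (Fin N) := gradient V q - p
      let p' : EuclideanSpace ℝ (Fin N) := q
      gradient V q = W₁ • lam + (2 * W₂) • q ∧
      ⟪lam, p'⟫ = ⟪lam, q⟫ ∧
      ⟪p', p'⟫ = ⟪q, q⟫ ∧
      ⟪lam, q'⟫ = M * W₁ + 2 * ⟪lam, q⟫ * W₂ - ⟪lam, p⟫ ∧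
      ⟪q', q'⟫ = M * W₁ ^ 2 + 4 * ⟪lam, q⟫ * W₁ * W₂ + 4 * ⟪q, q⟫ * W₂ ^ 2
          - 2 * ⟪lam, p⟫ * W₁ - 4 * ⟪q, p⟫ * W₂ + ⟪p, p⟫ ∧
      ⟪q', p'⟫ - M / 2
        = -(⟪q, p⟫ - M / 2) + ⟪lam, q⟫ * W₁ + 2 * ⟪q, q⟫ * W₂ - M := by
  intro M V q p W₁ W₂ q' p'
  have hgrad : gradient V q = W₁ • lam + (2 * W₂) • q :=
    (hasGradientAt_comp_inner_inner_self lam q (hW _)).gradient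
  refine ⟨hgrad, rfl, rfl, ?_, ?_, ?_⟩ <;>
  · simp only [q', p', M, hgrad, inner_sub_left, inner_sub_right, inner_add_left, inner_add_right,
      real_inner_smul_left, real_inner_smul_right, real_inner_comm lam q, real_inner_comm lam p,
      real_inner_comm q p]
    ring
end

section
/- Let λ ∈ ℝ^N and let V : ℝ^N → ℝ be differentiable. Define C(q,p) = ‖λ‖²‖q‖²‖p‖² − ‖p‖²(λ·q)² − ‖q‖²(λ·p)² − ‖λ‖²(q·p)² + 2(λ·q)(λ·p)(q·p). If C(∇V(q) − p, q) = C(q,p) for all q, p ∈ ℝ^N (i.e. C is an invariant of the standard-form map Φ(q,p) = (∇V(q) − p, q)), then V satisfies, at every point q: (a) the nonlinear condition [‖λ‖²‖q‖² − (λ·q)²]·‖∇V(q)‖² = ‖(q·∇V(q))·λ − (λ·∇V(q))·q‖², and (b) for every index j the linear condition [‖λ‖²‖q‖² − (λ·q)²]·∂V/∂q_j = [‖λ‖²q_j − (λ·q)λ_j]·(q·∇V(q)) + [‖q‖²λ_j − (λ·q)q_j]·(λ·∇V(q)). -/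
open scoped RealInnerProductSpace

/-- If the realized quartic Casimir
`C(q,p) = ‖λ‖²‖q‖²‖p‖² − ‖p‖²(λ·q)² − ‖q‖²(λ·p)² − ‖λ‖²(q·p)² + 2(λ·q)(λ·p)(q·p)`
is an invariant of the standard-form map `Φ(q,p) = (∇V(q) − p, q)`, then the
potential `V` satisfies, at every point `q`, the nonlinear condition
`[‖λ‖²‖q‖² − (λ·q)²]·‖∇V‖² = ‖(q·∇V)·λ − (λ·∇V)·q‖²` and, for every index `j`,
the linear condition
`[‖λ‖²‖q‖² − (λ·q)²]·∂V/∂q_j = [‖λ‖²q_j − (λ·q)λ_j](q·∇V) + [‖q‖²λ_j − (λ·q)q_j](λ·∇V)`. -/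
theorem casimir_invariance_implies_pde_system (N : ℕ)
    (lam : EuclideanSpace ℝ (Fin N))
    (V : EuclideanSpace ℝ (Fin N) → ℝ) (hV : Differentiable ℝ V)
    (C : EuclideanSpace ℝ (Fin N) → EuclideanSpace ℝ (Fin N) → ℝ)
    (hC : ∀ q p : EuclideanSpace ℝ (Fin N),
      C q p = ⟪lam, lam⟫ * ⟪q, q⟫ * ⟪p, p⟫ - ⟪p, p⟫ * ⟪lam, q⟫ ^ 2
        - ⟪q, q⟫ * ⟪lam, p⟫ ^ 2 - ⟪lam, lam⟫ * ⟪q, p⟫ ^ 2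
        + 2 * ⟪lam, q⟫ * ⟪lam, p⟫ * ⟪q, p⟫)
    (hinv : ∀ q p : EuclideanSpace ℝ (Fin N), C (gradient V q - p) q = C q p) :
    ∀ q : EuclideanSpace ℝ (Fin N),
      ((⟪lam, lam⟫ * ⟪q, q⟫ - ⟪lam, q⟫ ^ 2)
          * ⟪gradient V q, gradient V q⟫
        = ⟪⟪q, gradient V q⟫ • lam - ⟪lam, gradient V q⟫ • q,
            ⟪q, gradient V q⟫ • lam - ⟪lam, gradient V q⟫ • q⟫) ∧
      (∀ j : Fin N,
        (⟪lam, lam⟫ * ⟪q, q⟫ - ⟪lam, q⟫ ^ 2) * gradient V q j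
          = (⟪lam, lam⟫ * q j - ⟪lam, q⟫ * lam j) * ⟪q, gradient V q⟫
            + (⟪q, q⟫ * lam j - ⟪lam, q⟫ * q j) * ⟪lam, gradient V q⟫) := by
  intro q
  set g := gradient V q with hg
  have h0 : C q g = 0 := by
    have := hinv q g
    rw [← hg, sub_self] at this
    rw [← this, hC]
    simp
  have h0e : ⟪lam, lam⟫ * ⟪q, q⟫ * ⟪g, g⟫ - ⟪g, g⟫ * ⟪lam, q⟫ ^ 2
      - ⟪q, q⟫ * ⟪lam, g⟫ ^ 2 - ⟪lam, lam⟫ * ⟪q, g⟫ ^ 2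
      + 2 * ⟪lam, q⟫ * ⟪lam, g⟫ * ⟪q, g⟫ = 0 := by rw [← hC]; exact h0
  constructor
  · have hrhs : ⟪⟪q, g⟫ • lam - ⟪lam, g⟫ • q, ⟪q, g⟫ • lam - ⟪lam, g⟫ • q⟫
        = ⟪q,g⟫^2 * ⟪lam,lam⟫ - 2*⟪q,g⟫*⟪lam,g⟫*⟪lam,q⟫ + ⟪lam,g⟫^2*⟪q,q⟫ := by
      simp only [inner_sub_left, inner_sub_right, real_inner_smul_left,
        real_inner_smul_right, real_inner_comm q lam]
      ring
    rw [hrhs]; linarith [h0e]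
  · intro j
    have h1 := hinv q (EuclideanSpace.single j (1:ℝ))
    rw [← hg, hC, hC] at h1
    simp only [inner_sub_left, inner_sub_right, EuclideanSpace.inner_single_left,
      EuclideanSpace.inner_single_right, conj_trivial, one_mul, mul_one,
      EuclideanSpace.single_apply, if_pos rfl, if_true] at h1
    rw [real_inner_comm q g] at h1
    linear_combination (h0e - h1)/2
end

section
/- Let λ ∈ ℝ^N. For all m, m' with 3 ≤ m ≤ N and 3 ≤ m' ≤ N, the left Casimir functions C^[m] and C^[m'] are in involution with respect to the canonical Poisson bracket on ℝ^N × ℝ^N: at every point (q,p), Σ_{i=1}^N ( ∂C^[m]/∂qᵢ · ∂C^[m']/∂pᵢ − ∂C^[m]/∂pᵢ · ∂C^[m']/∂qᵢ ) = 0. -/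
/-- The angular-momentum-type function
`L_{ijk}(q,p) = λᵢ(p_j q_k − p_k q_j) + λ_j(p_k q_i − p_i q_k) + λ_k(p_i q_j − p_j q_i)`. -/
noncomputable def Lfun {N : ℕ} (lam : Fin N → ℝ) (i j k : Fin N) (q p : Fin N → ℝ) : ℝ :=
  lam i * (p j * q k - p k * q j) + lam j * (p k * q i - p i * q k)
    + lam k * (p i * q j - p j * q i)

/-- The left Casimir function `C^[m](q,p) = Σ_{1≤i<j<k≤m} L_{ijk}(q,p)²`. -/
noncomputable def leftCas {N : ℕ} (lam : Fin N → ℝ) (m : ℕ) (q p : Fin N → ℝ) : ℝ :=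
  ∑ t ∈ Finset.univ.filter (fun t : Fin N × Fin N × Fin N =>
      t.1 < t.2.1 ∧ t.2.1 < t.2.2 ∧ (t.2.2 : ℕ) < m),
    (Lfun lam t.1 t.2.1 t.2.2 q p) ^ 2

/-- Partial derivative of `f(q,p)` with respect to `qᵢ`. -/
noncomputable def pdq {N : ℕ} (f : (Fin N → ℝ) → (Fin N → ℝ) → ℝ) (i : Fin N)
    (q p : Fin N → ℝ) : ℝ :=
  deriv (fun t => f (Function.update q i t) p) (q i)

/-- Partial derivative of `f(q,p)` with respect to `pᵢ`. -/
noncomputable def pdp {N : ℕ} (f : (Fin N → ℝ) → (Fin N → ℝ) → ℝ) (i : Fin N)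
    (q p : Fin N → ℝ) : ℝ :=
  deriv (fun t => f q (Function.update p i t)) (p i)

/-!
By the Cauchy–Binet formula, `C^[m]` is the Gram determinant of `λ, p, q` for the dot product
restricted to the first `m` coordinates. Its gradients in `q` and in `p` are therefore combinations
of `λ, p, q` with cofactors as coefficients, supported on those coordinates. For `m ≤ m'` the
bracket then collapses to a polynomial identity between the restricted dot products at levels
`m` and `m'`.
-/

open Finset Function

section Gram

variable {ι : Type*}

def dotOn (s : Finset ι) (x y : ι → ℝ) : ℝ := ∑ i ∈ s, x i * y i

lemma dotOn_comm (s : Finset ι) (x y : ι → ℝ) : dotOn s x y = dotOn s y x := by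
  simp only [dotOn, mul_comm]

lemma dotOn_insert [DecidableEq ι] {s : Finset ι} {a : ι} (ha : a ∉ s) (x y : ι → ℝ) :
    dotOn (insert a s) x y = x a * y a + dotOn s x y :=
  sum_insert ha

lemma sum_linComb_mul_linComb (s : Finset ι) (x y z : ι → ℝ) (a b c a' b' c' : ℝ) :
    ∑ i ∈ s, (a * x i + b * y i + c * z i) * (a' * x i + b' * y i + c' * z i)
      = a * a' * dotOn s x x + (a * b' + b * a') * dotOn s x y + (a * c' + c * a') * dotOn s x z
        + b * b' * dotOn s y y + (b * c' + c * b') * dotOn s y z + c * c' * dotOn s z z := by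
  simp only [dotOn, mul_sum, ← sum_add_distrib]
  exact sum_congr rfl fun i _ => by ring

def gram3 (s : Finset ι) (x y z : ι → ℝ) : ℝ :=
  Matrix.det !![dotOn s x x, dotOn s x y, dotOn s x z;
    dotOn s y x, dotOn s y y, dotOn s y z;
    dotOn s z x, dotOn s z y, dotOn s z z]

lemma gram3_eq (s : Finset ι) (x y z : ι → ℝ) :
    gram3 s x y z = dotOn s x x * dotOn s y y * dotOn s z z - dotOn s x x * dotOn s y z ^ 2
      - dotOn s x y ^ 2 * dotOn s z z + 2 * dotOn s x y * dotOn s x z * dotOn s y z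
      - dotOn s x z ^ 2 * dotOn s y y := by
  simp only [gram3, Matrix.det_fin_three, Matrix.of_apply, Matrix.cons_val',
    Matrix.cons_val_zero, Matrix.cons_val_one, Matrix.cons_val, Matrix.cons_val_fin_one]
  rw [dotOn_comm s y x, dotOn_comm s z x, dotOn_comm s z y]
  ring

lemma gram3_comm (s : Finset ι) (x y z : ι → ℝ) : gram3 s x y z = gram3 s x z y := by
  rw [gram3_eq, gram3_eq, dotOn_comm s z y]
  ring

def minor2 (x y : ι → ℝ) (i j : ι) : ℝ := x i * y j - x j * y i

def minor3 (x y z : ι → ℝ) (i j k : ι) : ℝ :=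
  Matrix.det !![x i, x j, x k; y i, y j, y k; z i, z j, z k]

lemma minor3_eq_laplace (x y z : ι → ℝ) (a j k : ι) :
    minor3 x y z a j k = x a * minor2 y z j k - y a * minor2 x z j k + z a * minor2 x y j k := by
  simp only [minor3, minor2, Matrix.det_fin_three, Matrix.of_apply, Matrix.cons_val',
    Matrix.cons_val_zero, Matrix.cons_val_one, Matrix.cons_val, Matrix.cons_val_fin_one]
  ring

end Gram

section SumLt

variable {ι M : Type*} [LinearOrder ι] [AddCommMonoid M] {s : Finset ι} {a : ι}

lemma filter_lt_insert_of_le {j : ι} (h : a ≤ j) :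
    (insert a s).filter (j < ·) = s.filter (j < ·) := by
  rw [filter_insert, if_neg (not_lt.2 h)]

lemma sum_lt_insert_min (ha : ∀ b ∈ s, a < b) (f : ι → ι → M) :
    ∑ i ∈ insert a s, ∑ j ∈ insert a s with i < j, f i j
      = ∑ j ∈ s, f a j + ∑ i ∈ s, ∑ j ∈ s with i < j, f i j := by
  rw [sum_insert fun h => lt_irrefl a (ha a h), filter_lt_insert_of_le le_rfl,
    filter_true_of_mem ha]
  congr 1
  exact sum_congr rfl fun i hi => by rw [filter_lt_insert_of_le (ha i hi).le]

lemma sum_lt_lt_insert_min (ha : ∀ b ∈ s, a < b) (f : ι → ι → ι → M) :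
    ∑ i ∈ insert a s, ∑ j ∈ insert a s with i < j, ∑ k ∈ insert a s with j < k, f i j k
      = ∑ j ∈ s, ∑ k ∈ s with j < k, f a j k
        + ∑ i ∈ s, ∑ j ∈ s with i < j, ∑ k ∈ s with j < k, f i j k := by
  rw [sum_lt_insert_min ha]
  congr 1
  · exact sum_congr rfl fun j hj => by rw [filter_lt_insert_of_le (ha j hj).le]
  · exact sum_congr rfl fun i _ => sum_congr rfl fun j hj => by
      rw [filter_lt_insert_of_le (ha j (mem_filter.1 hj).1).le]

end SumLt

section CauchyBinet

variable {ι : Type*} [LinearOrder ι]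

theorem sum_minor2_mul_minor2 (s : Finset ι) (x y z w : ι → ℝ) :
    ∑ i ∈ s, ∑ j ∈ s with i < j, minor2 x y i j * minor2 z w i j
      = dotOn s x z * dotOn s y w - dotOn s x w * dotOn s y z := by
  induction s using Finset.induction_on_min with
  | empty => simp [dotOn]
  | insert a s ha ih =>
    have has : a ∉ s := fun h => lt_irrefl a (ha a h)
    have hnew : ∑ j ∈ s, minor2 x y a j * minor2 z w a j
        = x a * z a * dotOn s y w - x a * w a * dotOn s y z
          - y a * z a * dotOn s x w + y a * w a * dotOn s x z := by
      simp only [dotOn, mul_sum, ← sum_sub_distrib, ← sum_add_distrib]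
      exact sum_congr rfl fun j _ => by rw [minor2, minor2]; ring
    rw [sum_lt_insert_min ha, ih, hnew]
    simp only [dotOn_insert has]
    ring

theorem sum_sq_minor3 (s : Finset ι) (x y z : ι → ℝ) :
    ∑ i ∈ s, ∑ j ∈ s with i < j, ∑ k ∈ s with j < k, minor3 x y z i j k ^ 2
      = gram3 s x y z := by
  induction s using Finset.induction_on_min with
  | empty => simp [gram3_eq, dotOn]
  | insert a s ha ih =>
    have has : a ∉ s := fun h => lt_irrefl a (ha a h)
    have hsq : ∀ j k, minor3 x y z a j k ^ 2
        = x a ^ 2 * (minor2 y z j k * minor2 y z j k)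
          + y a ^ 2 * (minor2 x z j k * minor2 x z j k)
          + z a ^ 2 * (minor2 x y j k * minor2 x y j k)
          - 2 * x a * y a * (minor2 y z j k * minor2 x z j k)
          + 2 * x a * z a * (minor2 y z j k * minor2 x y j k)
          - 2 * y a * z a * (minor2 x z j k * minor2 x y j k) := fun j k => by
      rw [minor3_eq_laplace]; ring
    rw [sum_lt_lt_insert_min ha, ih]
    simp only [hsq, sum_add_distrib, sum_sub_distrib, ← mul_sum, sum_minor2_mul_minor2]
    rw [gram3_eq, gram3_eq]
    simp only [dotOn_insert has, dotOn_comm s y x, dotOn_comm s z x, dotOn_comm s z y]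
    ring

end CauchyBinet

section LeftCasimir

variable {N : ℕ}

def firstCoords (N m : ℕ) : Finset (Fin N) := univ.filter fun i => (i : ℕ) < m

@[simp]
lemma mem_firstCoords {m : ℕ} {i : Fin N} : i ∈ firstCoords N m ↔ (i : ℕ) < m := by
  simp [firstCoords]

lemma sum_filter_lt_lt_lt {M : Type*} [AddCommMonoid M] (m : ℕ) (f : Fin N → Fin N → Fin N → M) :
    ∑ t ∈ univ.filter (fun t : Fin N × Fin N × Fin N =>
        t.1 < t.2.1 ∧ t.2.1 < t.2.2 ∧ (t.2.2 : ℕ) < m), f t.1 t.2.1 t.2.2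
      = ∑ i ∈ firstCoords N m, ∑ j ∈ firstCoords N m with i < j,
          ∑ k ∈ firstCoords N m with j < k, f i j k := by
  simp only [firstCoords, filter_filter, sum_filter, Fintype.sum_prod_type]
  refine sum_congr rfl fun i _ => ?_
  split_ifs with hi
  · refine sum_congr rfl fun j _ => ?_
    split_ifs with hj
    · exact sum_congr rfl fun k _ => if_congr (by grind) rfl rfl
    · exact sum_eq_zero fun k _ => if_neg (by grind)
  · exact sum_eq_zero fun j _ => sum_eq_zero fun k _ => if_neg (by grind)

lemma Lfun_eq_minor3 (lam q p : Fin N → ℝ) (i j k : Fin N) :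
    Lfun lam i j k q p = minor3 lam p q i j k := by
  simp only [Lfun, minor3, Matrix.det_fin_three, Matrix.of_apply, Matrix.cons_val',
    Matrix.cons_val_zero, Matrix.cons_val_one, Matrix.cons_val, Matrix.cons_val_fin_one]
  ring

theorem leftCas_eq_gram3 (lam : Fin N → ℝ) (m : ℕ) (q p : Fin N → ℝ) :
    leftCas lam m q p = gram3 (firstCoords N m) lam p q := by
  rw [← sum_sq_minor3, leftCas, sum_filter_lt_lt_lt m fun i j k => Lfun lam i j k q p ^ 2]
  simp only [Lfun_eq_minor3]

lemma leftCas_comm (lam : Fin N → ℝ) (m : ℕ) (q p : Fin N → ℝ) :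
    leftCas lam m q p = leftCas lam m p q := by
  rw [leftCas_eq_gram3, leftCas_eq_gram3, gram3_comm]

end LeftCasimir

section Derivative

variable {ι : Type*} [DecidableEq ι]

lemma sum_apply_update (s : Finset ι) (F : ι → ℝ → ℝ) (z : ι → ℝ) (i : ι) (t : ℝ) :
    ∑ j ∈ s, F j (update z i t j)
      = ∑ j ∈ s, F j (z j) + if i ∈ s then F i t - F i (z i) else 0 := by
  simp only [apply_update F]
  split_ifs with hi
  · rw [sum_update_of_mem hi, sum_eq_add_sum_sdiff_singleton_of_mem hi]
    ring
  · rw [sum_update_of_notMem hi, add_zero]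

lemma dotOn_update_right (s : Finset ι) (x z : ι → ℝ) (i : ι) (t : ℝ) :
    dotOn s x (update z i t) = dotOn s x z + if i ∈ s then x i * (t - z i) else 0 := by
  rw [dotOn, sum_apply_update s (fun j v => x j * v), mul_sub]
  rfl

lemma dotOn_update_update (s : Finset ι) (z : ι → ℝ) (i : ι) (t : ℝ) :
    dotOn s (update z i t) (update z i t) = dotOn s z z + if i ∈ s then t ^ 2 - z i ^ 2 else 0 := by
  rw [dotOn, sum_apply_update s (fun _ v => v * v), sq, sq]
  rfl

lemma gram3_update_of_notMem {s : Finset ι} {i : ι} (hi : i ∉ s) (x y z : ι → ℝ) (t : ℝ) :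
    gram3 s x y (update z i t) = gram3 s x y z := by
  rw [gram3_eq, gram3_eq, dotOn_update_update, dotOn_update_right, dotOn_update_right]
  simp only [if_neg hi, add_zero]

theorem hasDerivAt_gram3_update {s : Finset ι} {i : ι} (hi : i ∈ s) (x y z : ι → ℝ) :
    HasDerivAt (fun t => gram3 s x y (update z i t))
      (2 * (dotOn s x y * dotOn s y z - dotOn s x z * dotOn s y y) * x i
        + 2 * (dotOn s x y * dotOn s x z - dotOn s x x * dotOn s y z) * y i
        + 2 * (dotOn s x x * dotOn s y y - dotOn s x y ^ 2) * z i) (z i) := by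
  have hline (c w : ℝ) : HasDerivAt (fun t => c + w * (t - z i)) w (z i) := by
    simpa using (((hasDerivAt_id (z i)).sub_const (z i)).const_mul w).const_add c
  have hsq (c : ℝ) : HasDerivAt (fun t => c + (t ^ 2 - z i ^ 2)) (2 * z i) (z i) := by
    simpa using ((hasDerivAt_pow 2 (z i)).sub_const (z i ^ 2)).const_add c
  have hxz := hline (dotOn s x z) (x i)
  have hyz := hline (dotOn s y z) (y i)
  have hzz := hsq (dotOn s z z)
  have H := ((((hzz.const_mul (dotOn s x x * dotOn s y y)).sub
    ((hyz.pow 2).const_mul (dotOn s x x))).sub (hzz.const_mul (dotOn s x y ^ 2))).add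
    ((hxz.mul hyz).const_mul (2 * dotOn s x y))).sub ((hxz.pow 2).mul_const (dotOn s y y))
  refine (H.congr_deriv ?_).congr_of_eventuallyEq (.of_forall fun t => ?_)
  · simp only [sub_self, mul_zero, add_zero]; ring
  · simp only [Pi.add_apply, Pi.sub_apply, Pi.mul_apply, Pi.pow_apply]
    rw [gram3_eq, dotOn_update_update, dotOn_update_right, dotOn_update_right]
    simp only [if_pos hi]
    ring

end Derivative

section PoissonBracket

variable {N : ℕ}

noncomputable def poissonBracket (f g : (Fin N → ℝ) → (Fin N → ℝ) → ℝ) (q p : Fin N → ℝ) : ℝ :=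
  ∑ i, (pdq f i q p * pdp g i q p - pdp f i q p * pdq g i q p)

lemma poissonBracket_skew (f g : (Fin N → ℝ) → (Fin N → ℝ) → ℝ) (q p : Fin N → ℝ) :
    -poissonBracket g f q p = poissonBracket f g q p := by
  rw [poissonBracket, poissonBracket, ← sum_neg_distrib]
  exact sum_congr rfl fun i _ => by ring

lemma pdp_eq_pdq_of_symm {f : (Fin N → ℝ) → (Fin N → ℝ) → ℝ} (hf : ∀ q p, f q p = f p q)
    (i : Fin N) (q p : Fin N → ℝ) : pdp f i q p = pdq f i p q := by
  rw [pdp, pdq]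
  congr 1
  funext t
  exact hf q _

variable (lam : Fin N → ℝ) {m : ℕ} {i : Fin N} (q p : Fin N → ℝ)

lemma pdq_leftCas_of_not_lt (hi : ¬ (i : ℕ) < m) : pdq (leftCas lam m) i q p = 0 := by
  simp only [pdq, leftCas_eq_gram3,
    gram3_update_of_notMem (mt mem_firstCoords.1 hi), deriv_const]

lemma pdp_leftCas_of_not_lt (hi : ¬ (i : ℕ) < m) : pdp (leftCas lam m) i q p = 0 := by
  rw [pdp_eq_pdq_of_symm (leftCas_comm lam m), pdq_leftCas_of_not_lt lam p q hi]

lemma pdq_leftCas_of_lt (hi : (i : ℕ) < m) :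
    pdq (leftCas lam m) i q p
      = 2 * (dotOn (firstCoords N m) lam p * dotOn (firstCoords N m) p q
          - dotOn (firstCoords N m) lam q * dotOn (firstCoords N m) p p) * lam i
        + 2 * (dotOn (firstCoords N m) lam p * dotOn (firstCoords N m) lam q
          - dotOn (firstCoords N m) lam lam * dotOn (firstCoords N m) p q) * p i
        + 2 * (dotOn (firstCoords N m) lam lam * dotOn (firstCoords N m) p p
          - dotOn (firstCoords N m) lam p ^ 2) * q i := by
  simp only [pdq, leftCas_eq_gram3]
  exact (hasDerivAt_gram3_update (mem_firstCoords.2 hi) lam p q).deriv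

lemma pdp_leftCas_of_lt (hi : (i : ℕ) < m) :
    pdp (leftCas lam m) i q p
      = 2 * (dotOn (firstCoords N m) lam q * dotOn (firstCoords N m) p q
          - dotOn (firstCoords N m) lam p * dotOn (firstCoords N m) q q) * lam i
        + 2 * (dotOn (firstCoords N m) lam lam * dotOn (firstCoords N m) q q
          - dotOn (firstCoords N m) lam q ^ 2) * p i
        + 2 * (dotOn (firstCoords N m) lam p * dotOn (firstCoords N m) lam q
          - dotOn (firstCoords N m) lam lam * dotOn (firstCoords N m) p q) * q i := by
  rw [pdp_eq_pdq_of_symm (leftCas_comm lam m), pdq_leftCas_of_lt lam p q hi,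
    dotOn_comm _ q p]
  ring

variable {lam q p} in
theorem poissonBracket_leftCas_of_le {m' : ℕ} (h : m ≤ m') :
    poissonBracket (leftCas lam m) (leftCas lam m') q p = 0 := by
  rw [poissonBracket, ← sum_add_sum_compl (firstCoords N m)]
  have houtside : ∑ i ∈ (firstCoords N m)ᶜ, (pdq (leftCas lam m) i q p * pdp (leftCas lam m') i q p
      - pdp (leftCas lam m) i q p * pdq (leftCas lam m') i q p) = 0 := by
    refine sum_eq_zero fun i hi => ?_
    have hi : ¬ (i : ℕ) < m := by simpa using hi
    rw [pdq_leftCas_of_not_lt lam q p hi, pdp_leftCas_of_not_lt lam q p hi]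
    ring
  rw [houtside, add_zero, sum_congr rfl fun i hi => by
    have hi := mem_firstCoords.1 hi
    rw [pdq_leftCas_of_lt lam q p hi, pdp_leftCas_of_lt lam q p (hi.trans_le h),
      pdp_leftCas_of_lt lam q p hi, pdq_leftCas_of_lt lam q p (hi.trans_le h)]]
  rw [sum_sub_distrib, sum_linComb_mul_linComb, sum_linComb_mul_linComb]
  ring

end PoissonBracket

theorem leftCasimirs_in_involution_general (N : ℕ) (lam : Fin N → ℝ) (m m' : ℕ)
    (q p : Fin N → ℝ) :
    ∑ i : Fin N,
      (pdq (leftCas lam m) i q p * pdp (leftCas lam m') i q p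
        - pdp (leftCas lam m) i q p * pdq (leftCas lam m') i q p) = 0 := by
  change poissonBracket (leftCas lam m) (leftCas lam m') q p = 0
  rcases le_total m m' with h | h
  · exact poissonBracket_leftCas_of_le h
  · rw [← poissonBracket_skew, poissonBracket_leftCas_of_le h, neg_zero]

/-- For `3 ≤ m ≤ N` and `3 ≤ m' ≤ N`, the left Casimir functions `C^[m]` and `C^[m']`
are in involution with respect to the canonical Poisson bracket
`{f,g} = Σᵢ (∂f/∂qᵢ ∂g/∂pᵢ − ∂f/∂pᵢ ∂g/∂qᵢ)` on `ℝ^N × ℝ^N`. -/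
theorem leftCasimirs_in_involution (N : ℕ) (lam : Fin N → ℝ) (m m' : ℕ)
    (hm3 : 3 ≤ m) (hmN : m ≤ N) (hm'3 : 3 ≤ m') (hm'N : m' ≤ N)
    (q p : Fin N → ℝ) :
    ∑ i : Fin N,
      (pdq (leftCas lam m) i q p * pdp (leftCas lam m') i q p
        - pdp (leftCas lam m) i q p * pdq (leftCas lam m') i q p) = 0 :=
  leftCasimirs_in_involution_general N lam m m' q p
end

section
/- Let λ ∈ ℝ^N and α, κ ∈ ℝ. Define the map Φ on ℝ^N × ℝ^N by Φ(q,p) = (−κ·q − α·λ − p, q) (the standard-form map of the potential V₁ = −α(λ·q) − (κ/2)‖q‖²). Then the function I₁(q,p) = ‖p‖² + ‖q‖² + α·(λ·p + λ·q) + κ·(q·p) + κ‖λ‖²/2 is an invariant of Φ: I₁(Φ(q,p)) = I₁(q,p) for all (q,p). -/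
/-- The function
`I₁(q,p) = ‖p‖² + ‖q‖² + α(λ·p + λ·q) + κ(q·p) + κ‖λ‖²/2`
is an invariant of the standard-form map `Φ(q,p) = (−κq − αλ − p, q)` of the
potential `V₁ = −α(λ·q) − (κ/2)‖q‖²`. -/
theorem I1_invariant_of_V1_map (N : ℕ) (lam : Fin N → ℝ) (α κ : ℝ) :
    let Φ : (Fin N → ℝ) × (Fin N → ℝ) → (Fin N → ℝ) × (Fin N → ℝ) :=
      fun qp => (fun i => -κ * qp.1 i - α * lam i - qp.2 i, qp.1)
    let I₁ : (Fin N → ℝ) → (Fin N → ℝ) → ℝ := fun q p =>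
      dotProd p p + dotProd q q + α * (dotProd lam p + dotProd lam q)
        + κ * dotProd q p + κ * dotProd lam lam / 2
    ∀ q p : Fin N → ℝ, I₁ (Φ (q, p)).1 (Φ (q, p)).2 = I₁ q p := by
  intro Φ I₁ q p
  simp only [Φ, I₁, dotProd, Finset.mul_sum, ← Finset.sum_div,
    ← Finset.sum_add_distrib]
  congr 1
  apply Finset.sum_congr rfl
  intros
  ring
end

section
/- Let λ ∈ ℝ^N and let F : ℝ → ℝ be differentiable. Define the potential V(q) = ‖q‖² + F(‖λ‖²‖q‖² − (λ·q)²) and the map Φ(q,p) = (∇V(q) − p, q), i.e. Φ(q,p) = (2q + 2F'(‖λ‖²‖q‖² − (λ·q)²)·(‖λ‖²·q − (λ·q)·λ) − p, q). Then the linear function I(q,p) = λ·p − λ·q is an invariant of Φ: I(Φ(q,p)) = I(q,p) for all (q,p). -/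
/-- For the singular potential `V(q) = ‖q‖² + F(‖λ‖²‖q‖² − (λ·q)²)` with `F`
differentiable, the linear function `I(q,p) = λ·p − λ·q` is an invariant of the
associated standard-form map
`Φ(q,p) = (2q + 2F'(‖λ‖²‖q‖² − (λ·q)²)(‖λ‖²q − (λ·q)λ) − p, q)`. -/
theorem linear_invariant_of_singular_V1s (N : ℕ) (lam : Fin N → ℝ)
    (F : ℝ → ℝ) (hF : Differentiable ℝ F) :
    let M : ℝ := dotProd lam lam
    let V : (Fin N → ℝ) → ℝ := fun q =>
      dotProd q q + F (M * dotProd q q - (dotProd lam q) ^ 2)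
    let Φ : (Fin N → ℝ) × (Fin N → ℝ) → (Fin N → ℝ) × (Fin N → ℝ) :=
      fun qp =>
        (fun i => 2 * qp.1 i
          + 2 * deriv F (M * dotProd qp.1 qp.1 - (dotProd lam qp.1) ^ 2)
            * (M * qp.1 i - dotProd lam qp.1 * lam i)
          - qp.2 i, qp.1)
    let I : (Fin N → ℝ) → (Fin N → ℝ) → ℝ := fun q p => dotProd lam p - dotProd lam q
    ∀ q p : Fin N → ℝ, I (Φ (q, p)).1 (Φ (q, p)).2 = I q p := by
  intro M V Φ I q p
  simp only [I, Φ, dotProd]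
  set c := deriv F (M * (∑ i, q i * q i) - (∑ i, lam i * q i) ^ 2)
  have h : ∀ i, lam i * (2 * q i + 2 * c * (M * q i - (∑ j, lam j * q j) * lam i) - p i)
      = 2 * (lam i * q i) + 2 * c * M * (lam i * q i)
        - 2 * c * (∑ j, lam j * q j) * (lam i * lam i) - lam i * p i := by
    intro i; ring
  rw [Finset.sum_congr rfl (fun i _ => h i)]
  simp only [Finset.sum_sub_distrib, Finset.sum_add_distrib, ← Finset.mul_sum]
  have hM : M = ∑ i, lam i * lam i := rfl
  rw [← hM]; ring
end

section
/- Let λ ∈ ℝ^N with M := ‖λ‖² ≠ 0 and let κ ∈ ℝ. Define the map Φ on ℝ^N × ℝ^N by Φ(q,p) = (−κ·q + ((κ+2)/M)·(λ·q)·λ − p, q) (the standard-form map of the potential V_{2,I} = ((κ+2)/(2M))(λ·q)² − (κ/2)‖q‖²). Then the function I_{2,I}(q,p) = −(1 + κ/2)·[(λ·p)² + (λ·q)²]/M + κ·(q·p − M/2) + ‖p‖² + ‖q‖² is an invariant of Φ: I_{2,I}(Φ(q,p)) = I_{2,I}(q,p) for all (q,p). -/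
lemma dotProd_expand {N : ℕ} (a b : ℝ) (u v w y : Fin N → ℝ) :
    dotProd (fun i => a * u i + b * v i - w i) y
      = a * dotProd u y + b * dotProd v y - dotProd w y := by
  simp [dotProd, sub_mul, add_mul, Finset.sum_add_distrib, Finset.sum_sub_distrib,
    Finset.mul_sum, mul_assoc]

/-- The function
`I_{2,I}(q,p) = −(1 + κ/2)[(λ·p)² + (λ·q)²]/M + κ(q·p − M/2) + ‖p‖² + ‖q‖²`
(with `M = ‖λ‖² ≠ 0`) is an invariant of the standard-form map
`Φ(q,p) = (−κq + ((κ+2)/M)(λ·q)λ − p, q)` of the potential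
`V_{2,I} = ((κ+2)/(2M))(λ·q)² − (κ/2)‖q‖²`. -/
theorem I2I_invariant_of_V2I_map (N : ℕ) (lam : Fin N → ℝ) (κ : ℝ)
    (hM : dotProd lam lam ≠ 0) :
    let M : ℝ := dotProd lam lam
    let Φ : (Fin N → ℝ) × (Fin N → ℝ) → (Fin N → ℝ) × (Fin N → ℝ) :=
      fun qp =>
        (fun i => -κ * qp.1 i + ((κ + 2) / M) * dotProd lam qp.1 * lam i - qp.2 i, qp.1)
    let I : (Fin N → ℝ) → (Fin N → ℝ) → ℝ := fun q p =>
      -(1 + κ / 2) * ((dotProd lam p) ^ 2 + (dotProd lam q) ^ 2) / M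
        + κ * (dotProd q p - M / 2) + dotProd p p + dotProd q q
    ∀ q p : Fin N → ℝ, I (Φ (q, p)).1 (Φ (q, p)).2 = I q p := by
  intro M Φ I q p
  simp only [Φ, I, M]
  have hq : ∀ y : Fin N → ℝ,
      dotProd (fun i => -κ * q i + (κ + 2) / dotProd lam lam * dotProd lam q * lam i - p i) y
        = -κ * dotProd q y + (κ + 2) / dotProd lam lam * dotProd lam q * dotProd lam y
          - dotProd p y := fun y => dotProd_expand _ _ _ _ _ _
  have hq' : ∀ y : Fin N → ℝ,
      dotProd y (fun i => -κ * q i + (κ + 2) / dotProd lam lam * dotProd lam q * lam i - p i)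
        = -κ * dotProd q y + (κ + 2) / dotProd lam lam * dotProd lam q * dotProd lam y
          - dotProd p y := fun y => by rw [dotProd_comm]; exact hq y
  simp only [hq, hq', dotProd_comm q lam, dotProd_comm p lam, dotProd_comm p q]
  field_simp
  ring
end

section
/- Let λ ∈ ℝ^N with M := ‖λ‖², and let κ, η, ζ ∈ ℝ. Define the map Φ on ℝ^N × ℝ^N by Φ(q,p) = (−κ·q − (η·(λ·q) + ζ)·λ − p, q) (the standard-form map of the potential V_{2,II} = −(η/2)(λ·q)² − ζ(λ·q) − (κ/2)‖q‖²). Then the function I_{2,IIa}(q,p) = −κ·(λ·q)(λ·p) + κ·M·(q·p − M/2) − (λ·q)² − (λ·p)² + (‖q‖² + ‖p‖²)·M is an invariant of Φ: I_{2,IIa}(Φ(q,p)) = I_{2,IIa}(q,p) for all (q,p). -/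
lemma dotProd_lin {N : ℕ} (w x y z : Fin N → ℝ) (a c : ℝ) :
    dotProd w (fun i => a * x i - c * y i - z i)
      = a * dotProd w x - c * dotProd w y - dotProd w z := by
  simp only [dotProd, mul_sub, Finset.sum_sub_distrib, Finset.mul_sum]
  congr 1
  · congr 1 <;> exact Finset.sum_congr rfl (fun i _ => by ring)



/-- The function
`I_{2,IIa}(q,p) = −κ(λ·q)(λ·p) + κM(q·p − M/2) − (λ·q)² − (λ·p)² + (‖q‖² + ‖p‖²)M`
(with `M = ‖λ‖²`) is an invariant of the standard-form map
`Φ(q,p) = (−κq − (η(λ·q) + ζ)λ − p, q)` of the potential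
`V_{2,II} = −(η/2)(λ·q)² − ζ(λ·q) − (κ/2)‖q‖²`. -/
theorem I2IIa_invariant_of_V2II_map (N : ℕ) (lam : Fin N → ℝ) (κ η ζ : ℝ) :
    let M : ℝ := dotProd lam lam
    let Φ : (Fin N → ℝ) × (Fin N → ℝ) → (Fin N → ℝ) × (Fin N → ℝ) :=
      fun qp =>
        (fun i => -κ * qp.1 i - (η * dotProd lam qp.1 + ζ) * lam i - qp.2 i, qp.1)
    let I : (Fin N → ℝ) → (Fin N → ℝ) → ℝ := fun q p =>
      -κ * dotProd lam q * dotProd lam p + κ * M * (dotProd q p - M / 2)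
        - (dotProd lam q) ^ 2 - (dotProd lam p) ^ 2
        + (dotProd q q + dotProd p p) * M
    ∀ q p : Fin N → ℝ, I (Φ (q, p)).1 (Φ (q, p)).2 = I q p := by
  intro M Φ I q p
  simp only [I, Φ, M]
  set c := η * dotProd lam q + ζ with hc
  have key : ∀ w : Fin N → ℝ,
      dotProd w (fun i => -κ * q i - (η * dotProd lam q + ζ) * lam i - p i)
        = -κ * dotProd w q - c * dotProd w lam - dotProd w p := by
    intro w; rw [← hc]; exact dotProd_lin w q lam p (-κ) c
  have h1 : dotProd lam (fun i => -κ * q i - (η * dotProd lam q + ζ) * lam i - p i)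
      = -κ * dotProd lam q - c * dotProd lam lam - dotProd lam p := key lam
  have key' : ∀ w : Fin N → ℝ,
      dotProd (fun i => -κ * q i - (η * dotProd lam q + ζ) * lam i - p i) w
        = -κ * dotProd w q - c * dotProd w lam - dotProd w p :=
    fun w => (dotProd_comm _ w).trans (key w)
  have h2 : dotProd (fun i => -κ * q i - (η * dotProd lam q + ζ) * lam i - p i)
      (fun i => -κ * q i - (η * dotProd lam q + ζ) * lam i - p i)
      = -κ * (-κ * dotProd q q - c * dotProd q lam - dotProd q p)
        - c * (-κ * dotProd lam q - c * dotProd lam lam - dotProd lam p)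
        - (-κ * dotProd p q - c * dotProd p lam - dotProd p p) := by
    rw [key, key' q, key' lam, key' p]
  have h3 : dotProd (fun i => -κ * q i - (η * dotProd lam q + ζ) * lam i - p i) q
      = -κ * dotProd q q - c * dotProd q lam - dotProd q p := key' q
  rw [h1, h2, h3]
  have e1 : dotProd q lam = dotProd lam q := dotProd_comm q lam
  have e2 : dotProd p lam = dotProd lam p := dotProd_comm p lam
  have e3 : dotProd p q = dotProd q p := dotProd_comm p q
  rw [e1, e2, e3]
  ring
end

section
/- Let λ ∈ ℝ^N with M := ‖λ‖², and let κ, η, ζ ∈ ℝ. Define the map Φ on ℝ^N × ℝ^N by Φ(q,p) = (−κ·q − (η·(λ·q) + ζ)·λ − p, q) (the standard-form map of the potential V_{2,II} = −(η/2)(λ·q)² − ζ(λ·q) − (κ/2)‖q‖²). Then the function I_{2,IIb}(q,p) = (η·M + κ)·(λ·q)(λ·p) + ζ·M·(λ·p + λ·q) + (λ·p)² + (λ·q)² is an invariant of Φ: I_{2,IIb}(Φ(q,p)) = I_{2,IIb}(q,p) for all (q,p). -/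
/-- The function
`I_{2,IIb}(q,p) = (ηM + κ)(λ·q)(λ·p) + ζM(λ·p + λ·q) + (λ·p)² + (λ·q)²`
(with `M = ‖λ‖²`) is an invariant of the standard-form map
`Φ(q,p) = (−κq − (η(λ·q) + ζ)λ − p, q)` of the potential
`V_{2,II} = −(η/2)(λ·q)² − ζ(λ·q) − (κ/2)‖q‖²`. -/
theorem I2IIb_invariant_of_V2II_map (N : ℕ) (lam : Fin N → ℝ) (κ η ζ : ℝ) :
    let M : ℝ := dotProd lam lam
    let Φ : (Fin N → ℝ) × (Fin N → ℝ) → (Fin N → ℝ) × (Fin N → ℝ) :=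
      fun qp =>
        (fun i => -κ * qp.1 i - (η * dotProd lam qp.1 + ζ) * lam i - qp.2 i, qp.1)
    let I : (Fin N → ℝ) → (Fin N → ℝ) → ℝ := fun q p =>
      (η * M + κ) * dotProd lam q * dotProd lam p
        + ζ * M * (dotProd lam p + dotProd lam q)
        + (dotProd lam p) ^ 2 + (dotProd lam q) ^ 2
    ∀ q p : Fin N → ℝ, I (Φ (q, p)).1 (Φ (q, p)).2 = I q p := by
  intro M Φ I q p
  have key : dotProd lam (fun i => -κ * q i - (η * dotProd lam q + ζ) * lam i - p i)
      = -κ * dotProd lam q - (η * dotProd lam q + ζ) * M - dotProd lam p := by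
    simp only [dotProd, M, Finset.mul_sum, ← Finset.sum_sub_distrib]
    apply Finset.sum_congr rfl
    intro i _
    ring
  simp only [I, Φ, key]
  ring
end

section
/- Let λ ∈ ℝ^N with M := ‖λ‖², let α ∈ ℝ with α ≠ 0, and let G : ℝ → ℝ be differentiable. Define the potential V(q) = −(α/2)‖q‖² + G(λ·q) and the map Φ(q,p) = (∇V(q) − p, q), i.e. Φ(q,p) = (−α·q + G'(λ·q)·λ − p, q). Then the function I(q,p) = (λ·q)(λ·p) + (1/α)·[(λ·q)² + (λ·p)² − M‖q‖² − M‖p‖²] − M·(q·p − M/2) is an invariant of Φ: I(Φ(q,p)) = I(q,p) for all (q,p). -/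
lemma dotProd_left {N : ℕ} (c₁ c₂ : ℝ) (x y z w : Fin N → ℝ) :
    dotProd (fun i => c₁ * x i + c₂ * y i - z i) w
      = c₁ * dotProd x w + c₂ * dotProd y w - dotProd z w := by
  simp [dotProd, add_mul, sub_mul, Finset.sum_add_distrib, Finset.sum_sub_distrib,
    Finset.mul_sum, mul_assoc]

lemma dotProd_right {N : ℕ} (c₁ c₂ : ℝ) (x y z w : Fin N → ℝ) :
    dotProd w (fun i => c₁ * x i + c₂ * y i - z i)
      = c₁ * dotProd w x + c₂ * dotProd w y - dotProd w z := by
  rw [dotProd_comm, dotProd_left, dotProd_comm x w, dotProd_comm y w, dotProd_comm z w]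

/-- For the singular potential `V(q) = −(α/2)‖q‖² + G(λ·q)` with `G` differentiable
and `α ≠ 0`, the function
`I(q,p) = (λ·q)(λ·p) + (1/α)[(λ·q)² + (λ·p)² − M‖q‖² − M‖p‖²] − M(q·p − M/2)`
(with `M = ‖λ‖²`) is an invariant of the associated standard-form map
`Φ(q,p) = (−αq + G'(λ·q)λ − p, q)`. -/
theorem invariant_of_singular_V2Is (N : ℕ) (lam : Fin N → ℝ) (α : ℝ) (hα : α ≠ 0)
    (G : ℝ → ℝ) (hG : Differentiable ℝ G) :
    let M : ℝ := dotProd lam lam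
    let V : (Fin N → ℝ) → ℝ := fun q => -(α / 2) * dotProd q q + G (dotProd lam q)
    let Φ : (Fin N → ℝ) × (Fin N → ℝ) → (Fin N → ℝ) × (Fin N → ℝ) :=
      fun qp =>
        (fun i => -α * qp.1 i + deriv G (dotProd lam qp.1) * lam i - qp.2 i, qp.1)
    let I : (Fin N → ℝ) → (Fin N → ℝ) → ℝ := fun q p =>
      dotProd lam q * dotProd lam p
        + (1 / α) * ((dotProd lam q) ^ 2 + (dotProd lam p) ^ 2
            - M * dotProd q q - M * dotProd p p)
        - M * (dotProd q p - M / 2)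
    ∀ q p : Fin N → ℝ, I (Φ (q, p)).1 (Φ (q, p)).2 = I q p := by
  intro M V Φ I q p
  simp only [I, Φ, M]
  simp only [dotProd_left, dotProd_right]
  rw [dotProd_comm p q, dotProd_comm q lam, dotProd_comm p lam]
  field_simp
  ring
end

section
/- Let λ ∈ ℝ^N with M := ‖λ‖² ≠ 0, let α, α₊ ∈ ℝ, and let F : ℝ → ℝ be differentiable. Define the potential V(q) = −(α/2)‖q‖² − (α₊/M)·(λ·q) + F(M‖q‖² − (λ·q)²) and the map Φ(q,p) = (∇V(q) − p, q), i.e. Φ(q,p) = (−α·q − (α₊/M)·λ + 2F'(M‖q‖² − (λ·q)²)·(M·q − (λ·q)·λ) − p, q). Then the function I(q,p) = (λ·p)² + (λ·q)² + α·(λ·p)(λ·q) + α₊·(λ·p + λ·q) is an invariant of Φ: I(Φ(q,p)) = I(q,p) for all (q,p). -/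
variable {N : ℕ}

lemma dotProd_eq_dotProduct (x y : Fin N → ℝ) : dotProd x y = x ⬝ᵥ y := rfl

lemma dotProd_linear_combination (lam q w p : Fin N → ℝ) (a b c : ℝ) :
    dotProd lam (fun i => a * q i - b * lam i + c * w i - p i)
      = a * dotProd lam q - b * dotProd lam lam + c * dotProd lam w - dotProd lam p := by
  have hvec : (fun i => a * q i - b * lam i + c * w i - p i) = a • q - b • lam + c • w - p := rfl
  rw [hvec]
  simp only [dotProd_eq_dotProduct, dotProduct_sub, dotProduct_add, dotProduct_smul, smul_eq_mul]

lemma dotProd_rejection_eq_zero (lam q : Fin N → ℝ) :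
    dotProd lam (fun i => dotProd lam lam * q i - dotProd lam q * lam i) = 0 := by
  have hvec : (fun i => dotProd lam lam * q i - dotProd lam q * lam i)
      = dotProd lam lam • q - dotProd lam q • lam := rfl
  rw [hvec]
  simp only [dotProd_eq_dotProduct, dotProduct_sub, dotProduct_smul, smul_eq_mul]
  ring

lemma dotProd_standardMap_fst {lam : Fin N → ℝ} (hM : dotProd lam lam ≠ 0)
    (α αp c : ℝ) (q p : Fin N → ℝ) :
    dotProd lam (fun i => -α * q i - (αp / dotProd lam lam) * lam i
        + c * (dotProd lam lam * q i - dotProd lam q * lam i) - p i)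
      = -α * dotProd lam q - αp - dotProd lam p := by
  rw [dotProd_linear_combination, dotProd_rejection_eq_zero, div_mul_cancel₀ αp hM]
  ring

theorem invariant_of_singular_V2IIs_general (N : ℕ) (lam : Fin N → ℝ)
    (hM : dotProd lam lam ≠ 0) (α αp : ℝ) (F : ℝ → ℝ) :
    let M : ℝ := dotProd lam lam
    let V : (Fin N → ℝ) → ℝ := fun q =>
      -(α / 2) * dotProd q q - (αp / M) * dotProd lam q
        + F (M * dotProd q q - (dotProd lam q) ^ 2)
    let Φ : (Fin N → ℝ) × (Fin N → ℝ) → (Fin N → ℝ) × (Fin N → ℝ) :=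
      fun qp =>
        (fun i => -α * qp.1 i - (αp / M) * lam i
          + 2 * deriv F (M * dotProd qp.1 qp.1 - (dotProd lam qp.1) ^ 2)
            * (M * qp.1 i - dotProd lam qp.1 * lam i)
          - qp.2 i, qp.1)
    let I : (Fin N → ℝ) → (Fin N → ℝ) → ℝ := fun q p =>
      (dotProd lam p) ^ 2 + (dotProd lam q) ^ 2
        + α * dotProd lam p * dotProd lam q
        + αp * (dotProd lam p + dotProd lam q)
    ∀ q p : Fin N → ℝ, I (Φ (q, p)).1 (Φ (q, p)).2 = I q p := by
  intro M V Φ I q p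
  simp only [I, Φ, M]
  rw [dotProd_standardMap_fst hM]
  ring

/-- For the singular potential
`V(q) = −(α/2)‖q‖² − (α₊/M)(λ·q) + F(M‖q‖² − (λ·q)²)` with `F` differentiable and
`M = ‖λ‖² ≠ 0`, the function
`I(q,p) = (λ·p)² + (λ·q)² + α(λ·p)(λ·q) + α₊(λ·p + λ·q)` is an invariant of the
associated standard-form map
`Φ(q,p) = (−αq − (α₊/M)λ + 2F'(M‖q‖² − (λ·q)²)(Mq − (λ·q)λ) − p, q)`. -/
theorem invariant_of_singular_V2IIs (N : ℕ) (lam : Fin N → ℝ)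
    (hM : dotProd lam lam ≠ 0) (α αp : ℝ) (F : ℝ → ℝ) (hF : Differentiable ℝ F) :
    let M : ℝ := dotProd lam lam
    let V : (Fin N → ℝ) → ℝ := fun q =>
      -(α / 2) * dotProd q q - (αp / M) * dotProd lam q
        + F (M * dotProd q q - (dotProd lam q) ^ 2)
    let Φ : (Fin N → ℝ) × (Fin N → ℝ) → (Fin N → ℝ) × (Fin N → ℝ) :=
      fun qp =>
        (fun i => -α * qp.1 i - (αp / M) * lam i
          + 2 * deriv F (M * dotProd qp.1 qp.1 - (dotProd lam qp.1) ^ 2)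
            * (M * qp.1 i - dotProd lam qp.1 * lam i)
          - qp.2 i, qp.1)
    let I : (Fin N → ℝ) → (Fin N → ℝ) → ℝ := fun q p =>
      (dotProd lam p) ^ 2 + (dotProd lam q) ^ 2
        + α * dotProd lam p * dotProd lam q
        + αp * (dotProd lam p + dotProd lam q)
    ∀ q p : Fin N → ℝ, I (Φ (q, p)).1 (Φ (q, p)).2 = I q p :=
  invariant_of_singular_V2IIs_general N lam hM α αp F
end

section
/- Let λ ∈ ℝ^N and α, κ ∈ ℝ. Define the map Φ on ℝ^N × ℝ^N by Φ(q,p) = (−κ·q − α·λ − p, q), and set A₋ = λ·q, A₊ = λ·p, B₋ = ‖q‖², B₊ = ‖p‖², K = q·p − M/2, M = ‖λ‖². Then the function Ĵ₁(q,p) = α²·A₊A₋ + 2α·A₋B₊ − 2α·A₋K + 2α·A₊B₋ − 2α·A₊K + (κ+2)·B₋B₊ + (B₋ + B₊)·M − (κ+2)·K² − (α²+2)·K·M is an invariant of Φ: Ĵ₁(Φ(q,p)) = Ĵ₁(q,p) for all (q,p). -/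
lemma dot_lin {N : ℕ} (x q l p : Fin N → ℝ) (κ α : ℝ) :
    dotProd x (fun i => -κ * q i - α * l i - p i)
      = -κ * dotProd x q - α * dotProd x l - dotProd x p := by
  simp only [dotProd, Finset.mul_sum, ← Finset.sum_sub_distrib]
  exact Finset.sum_congr rfl fun i _ => by ring

/-- In the `𝔥₆` generators `A₋ = λ·q`, `A₊ = λ·p`, `B₋ = ‖q‖²`, `B₊ = ‖p‖²`,
`K = q·p − M/2`, `M = ‖λ‖²`, the function
`Ĵ₁ = α²A₊A₋ + 2αA₋B₊ − 2αA₋K + 2αA₊B₋ − 2αA₊K + (κ+2)B₋B₊ + (B₋+B₊)M − (κ+2)K² − (α²+2)KM`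
is an invariant of the map `Φ(q,p) = (−κq − αλ − p, q)`. -/
theorem Jhat1_invariant_of_V1_map (N : ℕ) (lam : Fin N → ℝ) (α κ : ℝ) :
    let M : ℝ := dotProd lam lam
    let Φ : (Fin N → ℝ) × (Fin N → ℝ) → (Fin N → ℝ) × (Fin N → ℝ) :=
      fun qp => (fun i => -κ * qp.1 i - α * lam i - qp.2 i, qp.1)
    let J : (Fin N → ℝ) → (Fin N → ℝ) → ℝ := fun q p =>
      let Am : ℝ := dotProd lam q
      let Ap : ℝ := dotProd lam p
      let Bm : ℝ := dotProd q q
      let Bp : ℝ := dotProd p p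
      let K : ℝ := dotProd q p - M / 2
      α ^ 2 * Ap * Am + 2 * α * Am * Bp - 2 * α * Am * K + 2 * α * Ap * Bm
        - 2 * α * Ap * K + (κ + 2) * Bm * Bp + (Bm + Bp) * M
        - (κ + 2) * K ^ 2 - (α ^ 2 + 2) * K * M
    ∀ q p : Fin N → ℝ, J (Φ (q, p)).1 (Φ (q, p)).2 = J q p := by
  intro M Φ J q p
  simp only [J, Φ]
  have h1 : dotProd lam (fun i => -κ * q i - α * lam i - p i)
      = -κ * dotProd lam q - α * dotProd lam lam - dotProd lam p := dot_lin ..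
  have h2 : dotProd (fun i => -κ * q i - α * lam i - p i)
      (fun i => -κ * q i - α * lam i - p i)
      = -κ * (-κ * dotProd q q - α * dotProd q lam - dotProd q p)
        - α * (-κ * dotProd lam q - α * dotProd lam lam - dotProd lam p)
        - (-κ * dotProd p q - α * dotProd p lam - dotProd p p) := by
    rw [dot_lin, dotProd_comm (fun i => -κ * q i - α * lam i - p i) q,
      dotProd_comm (fun i => -κ * q i - α * lam i - p i) lam,
      dotProd_comm (fun i => -κ * q i - α * lam i - p i) p, dot_lin, dot_lin, dot_lin]
  have h3 : dotProd (fun i => -κ * q i - α * lam i - p i) q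
      = -κ * dotProd q q - α * dotProd lam q - dotProd p q := by
    rw [dotProd_comm, dot_lin, dotProd_comm q lam, dotProd_comm q p]
  rw [h1, h2, h3, dotProd_comm q lam, dotProd_comm p lam, dotProd_comm p q]
  ring
end
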